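/- arXiv:1311.6420 — 2 statements merged into one kernel-verified Lean document; each statement's English description precedes it below -/
import Mathlib

section
/- Take J = [r]×[r] and L = {u′,u″ : u ∈ U}. Let F be the full Fock space over I = [r]×[r]×L with vacuum state φ, and define g(p,q,u) = √(b_{p,q}(u))·ℓ((p,q,u′)) + √(b_{q,p}(u))·ℓ((q,p,u″))*. On the Hilbert direct sum F^{⊕r}, let G_{p,q}(u) be the bounded operator sending (ξ₁,…,ξ_r) to the tuple having g(p,q,u)ξ_q in position p and 0 elsewhere, and let Φ_k(x) = ⟨x δ^{(k)}, δ^{(k)}⟩, where δ^{(k)} ∈ F^{⊕r} has δ_Ω in position k and 0 elsewhere. Then for every k ∈ [r], every m ≥ 1, all p₁,q₁,…,p_m,q_m ∈ [r], u₁,…,u_m ∈ U and ε₁,…,ε_m ∈ {1,*}: Ψ_k(ζ_{p₁,q₁}(u₁)^{ε₁} ⋯ ζ_{p_m,q_m}(u_m)^{ε_m}) = Φ_k(G_{p₁,q₁}(u₁)^{ε₁} ⋯ G_{p_m,q_m}(u_m)^{ε_m}), where x^1 = x and x^* is the adjoint. -/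
noncomputable section

/-- A letter of a word in the matricially free Fock space of tracial type. -/
abbrev MLetter (r : ℕ) (L : Type*) := (Fin r × Fin r) × L

/-- A finite nonempty chained word with letters in `J × L`. -/
structure MWord (r : ℕ) (J : Set (Fin r × Fin r)) (L : Type*) where
  head : MLetter r L
  tail : List (MLetter r L)
  headJ : head.1 ∈ J
  tailJ : ∀ x ∈ tail, x.1 ∈ J
  chain : List.Chain' (fun a b : MLetter r L => a.1.2 = b.1.1) (head :: tail)

/-- Canonical orthonormal basis index set: vacua `Ω₁,…,Ω_r` and the words. -/
abbrev MBasis (r : ℕ) (J : Set (Fin r × Fin r)) (L : Type*) := (Fin r) ⊕ (MWord r J L)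

/-- The matricially free Fock space of tracial type, `ℓ²` of the basis set. -/
abbrev MSpace (r : ℕ) (J : Set (Fin r × Fin r)) (L : Type*) :=
  lp (fun _ : MBasis r J L => ℂ) 2

/-- Canonical basis vector. -/
def mvec {r : ℕ} {J : Set (Fin r × Fin r)} {L : Type*} (i : MBasis r J L) : MSpace r J L := by
  classical exact lp.single 2 i 1

/-- The vacuum vector `Ω_q`. -/
def vac {r : ℕ} {J : Set (Fin r × Fin r)} {L : Type*} (q : Fin r) : MSpace r J L :=
  mvec (Sum.inl q)

/-- Basis vector of a word. -/
def wvec {r : ℕ} {J : Set (Fin r × Fin r)} {L : Type*} (w : MWord r J L) : MSpace r J L :=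
  mvec (Sum.inr w)

/-- The single-letter word. -/
def MWord.single {r : ℕ} {J : Set (Fin r × Fin r)} {L : Type*}
    (x : MLetter r L) (hx : x.1 ∈ J) : MWord r J L :=
  ⟨x, [], hx, (by intro y hy; cases hy), List.isChain_singleton _⟩

/-- Prepending a letter to a word. -/
def MWord.cons {r : ℕ} {J : Set (Fin r × Fin r)} {L : Type*}
    (x : MLetter r L) (hx : x.1 ∈ J) (w : MWord r J L)
    (hc : x.1.2 = w.head.1.1) : MWord r J L :=
  ⟨x, w.head :: w.tail, hx, by
      intro y hy
      rcases List.mem_cons.mp hy with h | h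
      · exact h ▸ w.headJ
      · exact w.tailJ y h,
    List.isChain_cons_cons.mpr ⟨hc, w.chain⟩⟩

/-- `T` is the matricially free creation operator `℘_{p,q}(l)` with covariance `b`:
it maps `Ω_q` to `√b·((p,q,l))`, each word starting with first index `q` to `√b` times the
word with `((p,q),l)` prepended, and all other canonical basis vectors to `0`. -/
def IsMFCreation {r : ℕ} {J : Set (Fin r × Fin r)} {L : Type*}
    (b : ℝ) (p q : Fin r) (l : L) (hpq : ((p, q) : Fin r × Fin r) ∈ J)
    (T : MSpace r J L →L[ℂ] MSpace r J L) : Prop :=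
  T (vac q) = (Real.sqrt b : ℂ) • wvec (MWord.single ((p, q), l) hpq) ∧
  (∀ q' : Fin r, q' ≠ q → T (vac q') = 0) ∧
  (∀ (w : MWord r J L) (h : w.head.1.1 = q),
      T (wvec w) = (Real.sqrt b : ℂ) • wvec (MWord.cons ((p, q), l) hpq w h.symm)) ∧
  (∀ w : MWord r J L, w.head.1.1 ≠ q → T (wvec w) = 0)

/-- The vector state `Ψ_q(a) = ⟨aΩ_q, Ω_q⟩`. -/
def PsiM {r : ℕ} {J : Set (Fin r × Fin r)} {L : Type*} (q : Fin r)
    (a : MSpace r J L →L[ℂ] MSpace r J L) : ℂ :=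
  @inner ℂ _ _ (vac q : MSpace r J L) (a (vac q))

end
noncomputable section

/-- Basis index set of the full Fock space over `I`: the vacuum and the nonempty words. -/
abbrev FBasis (I : Type*) := Unit ⊕ {w : List I // w ≠ []}

/-- The full Fock space over `I`, `ℓ²` of its canonical basis set. -/
abbrev FSpace (I : Type*) := lp (fun _ : FBasis I => ℂ) 2

/-- Canonical basis vector of the full Fock space. -/
def fvec {I : Type*} (i : FBasis I) : FSpace I := by
  classical exact lp.single 2 i 1

/-- The vacuum vector `δ_Ω`. -/
def fvac {I : Type*} : FSpace I := fvec (Sum.inl ())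

/-- The basis vector `δ_w` of a nonempty word `w`. -/
def fword {I : Type*} (w : List I) (hw : w ≠ []) : FSpace I := fvec (Sum.inr ⟨w, hw⟩)

/-- `T` is the free creation operator `ℓ(i)`: it sends `δ_Ω` to `δ_{(i)}` and each
word basis vector `δ_w` to `δ_{i·w}`. -/
def IsFreeCreation {I : Type*} (i : I) (T : FSpace I →L[ℂ] FSpace I) : Prop :=
  T fvac = fword [i] (by simp) ∧
  ∀ (w : List I) (hw : w ≠ []), T (fword w hw) = fword (i :: w) (by simp)

/-- The vacuum state `φ(a) = ⟨aδ_Ω, δ_Ω⟩` on the full Fock space. -/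
def fockState {I : Type*} (a : FSpace I →L[ℂ] FSpace I) : ℂ :=
  @inner ℂ _ _ (fvac : FSpace I) (a fvac)

/-- The Hilbert direct sum `F^{⊕r}` of `r` copies of the full Fock space. -/
abbrev FockR (r : ℕ) (I : Type*) := PiLp 2 (fun _ : Fin r => FSpace I)

instance pilp_completeSpace {ι : Type*} [Fintype ι] {E : ι → Type*}
    [∀ i, NormedAddCommGroup (E i)] [∀ i, CompleteSpace (E i)] :
    CompleteSpace (PiLp 2 E) :=
  inferInstance

/-- Tuple constructor for `F^{⊕r}`. -/
def tupOf {r : ℕ} {I : Type*} (f : Fin r → FSpace I) : FockR r I :=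
  (WithLp.equiv 2 (∀ _ : Fin r, FSpace I)).symm f

/-- Component of an element of `F^{⊕r}`. -/
def tupComp {r : ℕ} {I : Type*} (ξ : FockR r I) (k : Fin r) : FSpace I :=
  (WithLp.equiv 2 (∀ _ : Fin r, FSpace I)) ξ k

/-- `δ^{(q)}`, the tuple with `δ_Ω` in position `q` and `0` elsewhere. -/
def fockDelta {r : ℕ} {I : Type*} (q : Fin r) : FockR r I :=
  tupOf (fun k => if k = q then fvac else 0)

/-- The state `Φ_k(x) = ⟨x δ^{(k)}, δ^{(k)}⟩` on the bounded operators on `F^{⊕r}`. -/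
def PhiR {r : ℕ} {I : Type*} (k : Fin r) (x : FockR r I →L[ℂ] FockR r I) : ℂ :=
  @inner ℂ _ _ (fockDelta k : FockR r I) (x (fockDelta k))

end
/-- `x^ε` for `ε ∈ {1, *}`: `x^1 = x` (encoded `true`) and `x^* = adjoint x` (encoded `false`). -/
noncomputable def sOp {H : Type*} [NormedAddCommGroup H] [InnerProductSpace ℂ H]
    [CompleteSpace H] (ε : Bool) (x : H →L[ℂ] H) : H →L[ℂ] H :=
  if ε then x else ContinuousLinearMap.adjoint x

/-!
Send `Ω_k` to `δ^{(k)}` and a chained word `w` with first index `k` to `δ_w` placed in slot `k`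
of `F^{⊕r}`. On canonical basis vectors, `℘_{p,q}(l)` and `ℓ(p,q,l)` are weighted shifts along
partial bijections of the bases, hence so are their adjoints, along the inverse bijections.
Since the image of a basis vector is a chained word sitting in the slot of its first index,
`g(p,q,u)` moves it from slot `q` to slot `p` exactly as `ζ_{p,q}(u)` acts on the matricially
free side; the same holds for the adjoints. So both operators preserve the graph of the embedding
on finite combinations of basis vectors, products applied to `(Ω_k, δ^{(k)})` stay in that graph,
and the embedding carries the `Ω_k`-coefficient to the `δ^{(k)}`-coefficient.
-/

open scoped InnerProductSpace

section WeightedShift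

variable {𝕜 ι κ E F : Type*} [RCLike 𝕜]
  [NormedAddCommGroup E] [InnerProductSpace 𝕜 E] [NormedAddCommGroup F] [InnerProductSpace 𝕜 F]

def IsWeightedShift (b : HilbertBasis ι 𝕜 E) (b' : HilbertBasis κ 𝕜 F) (σ : ι ≃. κ) (c : 𝕜)
    (T : E →L[𝕜] F) : Prop :=
  ∀ i, T (b i) = (σ i).elim 0 (fun j => c • b' j)

open Classical in
theorem HilbertBasis.inner_elim_smul_right (b : HilbertBasis ι 𝕜 E) (c : 𝕜) (o : Option ι)
    (i : ι) : ⟪b i, o.elim 0 (fun j => c • b j)⟫_𝕜 = if i ∈ o then c else 0 := by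
  cases o with
  | none => simp
  | some j =>
    simp [inner_smul_right, orthonormal_iff_ite.mp b.orthonormal, eq_comm]

theorem IsWeightedShift.adjoint [CompleteSpace E] [CompleteSpace F] {b : HilbertBasis ι 𝕜 E}
    {b' : HilbertBasis κ 𝕜 F} {σ : ι ≃. κ} {c : 𝕜} {T : E →L[𝕜] F}
    (hT : IsWeightedShift b b' σ c T) :
    IsWeightedShift b' b σ.symm (starRingEnd 𝕜 c) (ContinuousLinearMap.adjoint T) := by
  intro j
  apply b.repr.injective
  ext i
  rw [b.repr_apply_apply, b.repr_apply_apply, ContinuousLinearMap.adjoint_inner_right, hT,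
    ← inner_conj_symm, b'.inner_elim_smul_right, b.inner_elim_smul_right]
  by_cases h : j ∈ σ i <;> simp [h, σ.mem_iff_mem]

end WeightedShift

namespace MWord

variable {r : ℕ} {J : Set (Fin r × Fin r)} {L : Type*}

theorem eq_iff {w v : MWord r J L} : w = v ↔ w.head = v.head ∧ w.tail = v.tail := by
  refine ⟨fun h => h ▸ ⟨rfl, rfl⟩, fun ⟨hh, ht⟩ => ?_⟩
  cases w; cases v
  simp_all

def dropFirst : MWord r J L → MBasis r J L
  | ⟨x, [], _, _, _⟩ => .inl x.1.2
  | ⟨_, t :: ts, _, htJ, hc⟩ => .inr ⟨t, ts, htJ t List.mem_cons_self,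
      fun y hy => htJ y (List.mem_cons_of_mem t hy), hc.tail⟩

theorem dropFirst_eq_inl_iff {w : MWord r J L} {k : Fin r} :
    w.dropFirst = .inl k ↔ w.tail = [] ∧ w.head.1.2 = k := by
  obtain ⟨x, _ | ⟨t, ts⟩, _, _, _⟩ := w <;> simp [dropFirst]

theorem dropFirst_eq_inr_iff {w v : MWord r J L} :
    w.dropFirst = .inr v ↔ w.tail = v.head :: v.tail := by
  obtain ⟨x, _ | ⟨t, ts⟩, _, _, _⟩ := w <;> simp [dropFirst, eq_iff, eq_comm]

theorem single_eq_iff {w : MWord r J L} {x : MLetter r L} {hx : x.1 ∈ J} :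
    single x hx = w ↔ w.head = x ∧ w.tail = [] := by
  rw [eq_comm, eq_iff]
  rfl

theorem cons_eq_iff {w v : MWord r J L} {x : MLetter r L} {hx : x.1 ∈ J}
    {hc : x.1.2 = v.head.1.1} :
    cons x hx v hc = w ↔ w.head = x ∧ w.tail = v.head :: v.tail := by
  rw [eq_comm, eq_iff]
  rfl

theorem head_snd_eq_of_tail_eq {w v : MWord r J L} (h : w.tail = v.head :: v.tail) :
    w.head.1.2 = v.head.1.1 := by
  have := w.chain
  rw [h] at this
  exact (List.isChain_cons_cons.mp this).1

end MWord

namespace MBasis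

variable {r : ℕ} {J : Set (Fin r × Fin r)} {L : Type*}

open Classical in
noncomputable def creationShift (x : MLetter r L) (hx : x.1 ∈ J) :
    MBasis r J L ≃. MBasis r J L where
  toFun
    | .inl k => if k = x.1.2 then some (.inr (MWord.single x hx)) else none
    | .inr v => if h : v.head.1.1 = x.1.2 then some (.inr (MWord.cons x hx v h.symm)) else none
  invFun
    | .inl _ => none
    | .inr w => if w.head = x then some w.dropFirst else none
  inv := by
    rintro (k | v) (k' | w)
    · simp
    · simp only [Option.ite_none_right_eq_some, Option.some.injEq, Sum.inr.injEq,
        MWord.dropFirst_eq_inl_iff, MWord.single_eq_iff]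
      constructor
      · rintro ⟨rfl, ht, rfl⟩
        exact ⟨rfl, rfl, ht⟩
      · rintro ⟨rfl, rfl, ht⟩
        exact ⟨rfl, ht, rfl⟩
    · simp
    · simp only [Option.ite_none_right_eq_some, Option.some.injEq, Sum.inr.injEq,
        MWord.dropFirst_eq_inr_iff, MWord.cons_eq_iff, Option.dite_none_right_eq_some]
      exact ⟨fun h => ⟨h.1 ▸ (MWord.head_snd_eq_of_tail_eq h.2).symm, h⟩, fun ⟨_, h⟩ => h⟩

end MBasis

noncomputable abbrev lpBasis (α : Type*) : HilbertBasis α ℂ (lp (fun _ : α => ℂ) 2) := default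

section MatriciallyFree

variable {r : ℕ} {J : Set (Fin r × Fin r)} {L : Type*}

theorem mvec_eq_lpBasis (i : MBasis r J L) : mvec i = lpBasis _ i := by
  classical
  rw [← HilbertBasis.repr_symm_single]
  rfl

theorem IsMFCreation.isWeightedShift {β : ℝ} {p q : Fin r} {l : L} {hpq : (p, q) ∈ J}
    {T : MSpace r J L →L[ℂ] MSpace r J L} (hT : IsMFCreation β p q l hpq T) :
    IsWeightedShift (lpBasis _) (lpBasis _) (MBasis.creationShift ((p, q), l) hpq)
      (Real.sqrt β : ℂ) T := by
  obtain ⟨hvac, hvac', hword, hword'⟩ := hT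
  rintro (k | w) <;> simp only [← mvec_eq_lpBasis]
  · by_cases hk : k = q
    · subst hk
      simpa [vac, wvec, MBasis.creationShift] using hvac
    · simpa [vac, wvec, MBasis.creationShift, hk] using hvac' k hk
  · by_cases hw : w.head.1.1 = q
    · simpa [vac, wvec, MBasis.creationShift, hw] using hword w hw
    · simpa [vac, wvec, MBasis.creationShift, hw] using hword' w hw

theorem IsMFCreation.adjoint_apply_vac {β : ℝ} {p q : Fin r} {l : L} {hpq : (p, q) ∈ J}
    {T : MSpace r J L →L[ℂ] MSpace r J L} (hT : IsMFCreation β p q l hpq T) (k : Fin r) :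
    ContinuousLinearMap.adjoint T (vac k) = 0 := by
  rw [vac, mvec_eq_lpBasis, hT.isWeightedShift.adjoint]
  rfl

open Classical in
theorem IsMFCreation.adjoint_apply_wvec {β : ℝ} {p q : Fin r} {l : L} {hpq : (p, q) ∈ J}
    {T : MSpace r J L →L[ℂ] MSpace r J L} (hT : IsMFCreation β p q l hpq T) (w : MWord r J L) :
    ContinuousLinearMap.adjoint T (wvec w) =
      if w.head = ((p, q), l) then (Real.sqrt β : ℂ) • mvec w.dropFirst else 0 := by
  rw [wvec, mvec_eq_lpBasis, hT.isWeightedShift.adjoint, mvec_eq_lpBasis]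
  by_cases hw : w.head = ((p, q), l) <;> simp [MBasis.creationShift, PEquiv.symm, hw]

end MatriciallyFree

namespace FBasis

variable {I : Type*}

def equivList : FBasis I ≃ List I where
  toFun
    | .inl _ => []
    | .inr w => w.1
  invFun
    | [] => .inl ()
    | i :: w => .inr ⟨i :: w, List.cons_ne_nil i w⟩
  left_inv := by rintro (⟨⟩ | ⟨_ | ⟨i, w⟩, hw⟩) <;> first | rfl | exact absurd rfl hw
  right_inv := by rintro (_ | ⟨i, w⟩) <;> rfl

open Classical in
noncomputable def freeShift (i : I) : FBasis I ≃. FBasis I where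
  toFun a := some (equivList.symm (i :: equivList a))
  invFun b :=
    if (equivList b).head? = some i then some (equivList.symm (equivList b).tail) else none
  inv a b := by
    simp only [Option.ite_none_right_eq_some, Option.some.injEq, Equiv.symm_apply_eq]
    rcases equivList b with _ | ⟨j, w⟩
    · simp
    · simp only [List.head?_cons, Option.some.injEq, List.tail_cons, List.cons.injEq]
      exact ⟨fun ⟨h, h'⟩ => ⟨h.symm, h'.symm⟩, fun ⟨h, h'⟩ => ⟨h.symm, h'.symm⟩⟩

end FBasis

section FullFock

variable {I : Type*}

theorem fvec_eq_lpBasis (a : FBasis I) : fvec a = lpBasis _ a := by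
  classical
  rw [← HilbertBasis.repr_symm_single]
  rfl

theorem fvac_eq_fvec_nil : (fvac : FSpace I) = fvec (FBasis.equivList.symm []) :=
  rfl

theorem IsFreeCreation.isWeightedShift {i : I} {T : FSpace I →L[ℂ] FSpace I}
    (hT : IsFreeCreation i T) :
    IsWeightedShift (lpBasis _) (lpBasis _) (FBasis.freeShift i) 1 T := by
  rintro (u | ⟨w, hw⟩) <;> simp only [← fvec_eq_lpBasis]
  · simpa [FBasis.freeShift, FBasis.equivList, fvac, fword] using hT.1
  · obtain ⟨j, w, rfl⟩ := List.exists_cons_of_ne_nil hw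
    simpa [FBasis.freeShift, FBasis.equivList, fword] using hT.2 _ hw

theorem IsFreeCreation.apply_fvec {i : I} {T : FSpace I →L[ℂ] FSpace I}
    (hT : IsFreeCreation i T) (w : List I) :
    T (fvec (FBasis.equivList.symm w)) = fvec (FBasis.equivList.symm (i :: w)) := by
  simpa [FBasis.freeShift, ← fvec_eq_lpBasis] using hT.isWeightedShift (FBasis.equivList.symm w)

open Classical in
theorem IsFreeCreation.adjoint_apply_fvec {i : I} {T : FSpace I →L[ℂ] FSpace I}
    (hT : IsFreeCreation i T) (w : List I) :
    ContinuousLinearMap.adjoint T (fvec (FBasis.equivList.symm w)) =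
      if w.head? = some i then fvec (FBasis.equivList.symm w.tail) else 0 := by
  rw [fvec_eq_lpBasis, hT.isWeightedShift.adjoint]
  by_cases hw : w.head? = some i <;>
    simp [FBasis.freeShift, PEquiv.symm, hw, fvec_eq_lpBasis]

end FullFock

section PiLpSingle

variable {𝕜 ι : Type*} [RCLike 𝕜] [DecidableEq ι] {β : ι → Type*}
  [∀ i, NormedAddCommGroup (β i)] [∀ i, InnerProductSpace 𝕜 (β i)]

theorem PiLp.inner_single_left [Fintype ι] (k : ι) (v : β k) (y : PiLp 2 β) :
    ⟪PiLp.single 2 k v, y⟫_𝕜 = ⟪v, y k⟫_𝕜 := by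
  rw [PiLp.inner_apply, Finset.sum_eq_single k (fun j _ hj => by simp [hj]) (by simp),
    PiLp.single_eq_same]

theorem PiLp.inner_single_right [Fintype ι] (k : ι) (v : β k) (y : PiLp 2 β) :
    ⟪y, PiLp.single 2 k v⟫_𝕜 = ⟪y k, v⟫_𝕜 := by
  rw [← inner_conj_symm, PiLp.inner_single_left, inner_conj_symm]

theorem PiLp.single_smul (k : ι) (c : 𝕜) (v : β k) :
    PiLp.single 2 k (c • v) = c • PiLp.single 2 k v := by
  simp_rw [← PiLp.toLp_single, Pi.single_smul, WithLp.toLp_smul]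

end PiLpSingle

section BlockOperator

variable {ι H : Type*} [Fintype ι] [DecidableEq ι]
  [NormedAddCommGroup H] [InnerProductSpace ℂ H]

/-- `Z = g ⊗ e(a,b)`. -/
def IsBlockOp (a b : ι) (g : H →L[ℂ] H)
    (Z : (PiLp 2 fun _ : ι => H) →L[ℂ] PiLp 2 fun _ : ι => H) : Prop :=
  ∀ ξ, Z ξ = PiLp.single 2 a (g (ξ b))

theorem IsBlockOp.adjoint [CompleteSpace H] {a b : ι} {g : H →L[ℂ] H}
    {Z : (PiLp 2 fun _ : ι => H) →L[ℂ] PiLp 2 fun _ : ι => H} (hZ : IsBlockOp a b g Z) :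
    IsBlockOp b a (ContinuousLinearMap.adjoint g) (ContinuousLinearMap.adjoint Z) := by
  intro ξ
  apply ext_inner_left ℂ
  intro η
  rw [ContinuousLinearMap.adjoint_inner_right, hZ, PiLp.inner_single_left,
    PiLp.inner_single_right, ContinuousLinearMap.adjoint_inner_right]

theorem IsBlockOp.adjoint_real_smul [CompleteSpace H] {a b : ι} {e₁ e₂ : H →L[ℂ] H} {c₁ c₂ : ℝ}
    {Z : (PiLp 2 fun _ : ι => H) →L[ℂ] PiLp 2 fun _ : ι => H}
    (hZ : IsBlockOp a b ((c₁ : ℂ) • e₁ + (c₂ : ℂ) • ContinuousLinearMap.adjoint e₂) Z) :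
    IsBlockOp b a ((c₂ : ℂ) • e₂ + (c₁ : ℂ) • ContinuousLinearMap.adjoint e₁)
      (ContinuousLinearMap.adjoint Z) := by
  have hg := hZ.adjoint
  rwa [map_add, map_smulₛₗ, map_smulₛₗ, ContinuousLinearMap.adjoint_adjoint, Complex.conj_ofReal,
    Complex.conj_ofReal, add_comm] at hg

omit [Fintype ι] in
theorem IsBlockOp.apply_single {a b : ι} {g : H →L[ℂ] H}
    {Z : (PiLp 2 fun _ : ι => H) →L[ℂ] PiLp 2 fun _ : ι => H} (hZ : IsBlockOp a b g Z)
    (k : ι) (v : H) : Z (PiLp.single 2 k v) = if k = b then PiLp.single 2 a (g v) else 0 := by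
  rw [hZ]
  by_cases hk : k = b
  · subst hk
    simp
  · simp [hk]

end BlockOperator

theorem isBlockOp_of_tupComp {r : ℕ} {I : Type*} {a b : Fin r} {g : FSpace I →L[ℂ] FSpace I}
    {Z : FockR r I →L[ℂ] FockR r I}
    (hZ : ∀ ξ k, tupComp (Z ξ) k = if k = a then g (tupComp ξ b) else 0) :
    IsBlockOp a b g Z := by
  intro ξ
  refine PiLp.ext fun k => ?_
  by_cases hk : k = a
  · subst hk
    simpa [tupComp] using hZ ξ k
  · simpa [hk, tupComp] using hZ ξ k

theorem fockDelta_eq_single {r : ℕ} {I : Type*} (k : Fin r) :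
    (fockDelta k : FockR r I) = PiLp.single 2 k fvac := by
  refine PiLp.ext fun k' => ?_
  by_cases hk : k' = k
  · subst hk
    simp [fockDelta, tupOf]
  · simp [fockDelta, tupOf, hk]

namespace MBasis

variable {r : ℕ} {J : Set (Fin r × Fin r)} {L : Type*}

def start : MBasis r J L → Fin r
  | .inl k => k
  | .inr w => w.head.1.1

def letters : MBasis r J L → List (Fin r × Fin r × L)
  | .inl _ => []
  | .inr w => (w.head :: w.tail).map (Equiv.prodAssoc _ _ _)

noncomputable def toFock (j : MBasis r J L) : FockR r (Fin r × Fin r × L) :=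
  PiLp.single 2 j.start (fvec (FBasis.equivList.symm j.letters))

theorem toFock_dropFirst (w : MWord r J L) :
    toFock w.dropFirst =
      PiLp.single 2 w.head.1.2 (fvec (FBasis.equivList.symm (letters (.inr w)).tail)) := by
  obtain ⟨x, _ | ⟨t, ts⟩, _, _, hc⟩ := w
  · rfl
  · have ht : x.1.2 = t.1.1 := (List.isChain_cons_cons.mp hc).1
    simp only [toFock, start, letters, ht]
    rfl

end MBasis

/-- The graph of the linear extension of `MBasis.toFock` to finite combinations of basis
vectors. -/
noncomputable def fockGraph (r : ℕ) (J : Set (Fin r × Fin r)) (L : Type*) :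
    Submodule ℂ (MSpace r J L × FockR r (Fin r × Fin r × L)) :=
  Submodule.span ℂ (Set.range fun j => (mvec j, j.toFock))

section Step

open ContinuousLinearMap

variable {r : ℕ} {J : Set (Fin r × Fin r)} {L : Type*} {a b : Fin r} {hab : (a, b) ∈ J}
  {hba : (b, a) ∈ J} {l₁ l₂ : L} {β₁ β₂ : ℝ} {T S : MSpace r J L →L[ℂ] MSpace r J L}
  {e₁ e₂ : FSpace (Fin r × Fin r × L) →L[ℂ] FSpace (Fin r × Fin r × L)}
  {Z : FockR r (Fin r × Fin r × L) →L[ℂ] FockR r (Fin r × Fin r × L)}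

theorem mvec_toFock_mem_fockGraph (j : MBasis r J L) : (mvec j, j.toFock) ∈ fockGraph r J L :=
  Submodule.subset_span ⟨j, rfl⟩

theorem creation_add_adjoint_vac_mem_fockGraph
    (hT : IsMFCreation β₁ a b l₁ hab T) (hS : IsMFCreation β₂ b a l₂ hba S)
    (he₁ : IsFreeCreation (a, b, l₁) e₁) (he₂ : IsFreeCreation (b, a, l₂) e₂)
    (hZ : IsBlockOp a b ((Real.sqrt β₁ : ℂ) • e₁ + (Real.sqrt β₂ : ℂ) • adjoint e₂) Z)
    (k : Fin r) :
    ((T + adjoint S) (vac k), Z (MBasis.toFock (.inl k : MBasis r J L))) ∈ fockGraph r J L := by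
  rw [add_apply, hS.adjoint_apply_vac, add_zero, MBasis.toFock, hZ.apply_single]
  by_cases hk : k = b
  · subst hk
    convert (fockGraph r J L).smul_mem (Real.sqrt β₁ : ℂ)
      (mvec_toFock_mem_fockGraph (.inr (MWord.single ((a, k), l₁) hab))) using 1
    refine Prod.ext hT.1 ?_
    simp [MBasis.toFock, MBasis.start, MBasis.letters, MWord.single, he₁.apply_fvec,
      he₂.adjoint_apply_fvec, PiLp.single_smul, -Complex.coe_smul]
  · rw [hT.2.1 k hk, MBasis.start, if_neg hk]
    exact (fockGraph r J L).zero_mem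

theorem creation_add_adjoint_wvec_mem_fockGraph
    (hT : IsMFCreation β₁ a b l₁ hab T) (hS : IsMFCreation β₂ b a l₂ hba S)
    (he₁ : IsFreeCreation (a, b, l₁) e₁) (he₂ : IsFreeCreation (b, a, l₂) e₂)
    (hZ : IsBlockOp a b ((Real.sqrt β₁ : ℂ) • e₁ + (Real.sqrt β₂ : ℂ) • adjoint e₂) Z)
    (w : MWord r J L) :
    ((T + adjoint S) (wvec w), Z (MBasis.toFock (.inr w))) ∈ fockGraph r J L := by
  classical
  rw [add_apply, hS.adjoint_apply_wvec, MBasis.toFock, hZ.apply_single]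
  by_cases hw : w.head.1.1 = b
  · rw [hT.2.2.1 w hw]
    have hcons := (fockGraph r J L).smul_mem (Real.sqrt β₁ : ℂ)
      (mvec_toFock_mem_fockGraph (.inr (MWord.cons ((a, b), l₁) hab w hw.symm)))
    by_cases hh : w.head = ((b, a), l₂)
    · convert add_mem hcons ((fockGraph r J L).smul_mem (Real.sqrt β₂ : ℂ)
        (mvec_toFock_mem_fockGraph w.dropFirst)) using 1
      refine Prod.ext ?_ ?_
      · simp [hh, wvec]
      · simp only [Prod.snd_add, Prod.smul_snd, MBasis.toFock_dropFirst]
        simp [MBasis.toFock, MBasis.start, MBasis.letters, MWord.cons, hh,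
          he₁.apply_fvec, he₂.adjoint_apply_fvec, PiLp.single_smul, PiLp.single_add,
          -Complex.coe_smul]
    · have hh' : ¬(w.head.1.2 = a ∧ w.head.2 = l₂) :=
        fun h => hh (Prod.ext (Prod.ext hw h.1) h.2)
      convert hcons using 1
      refine Prod.ext ?_ ?_
      · simp [hh, wvec]
      · simp [MBasis.toFock, MBasis.start, MBasis.letters, MWord.cons, hw, hh',
          he₁.apply_fvec, he₂.adjoint_apply_fvec, PiLp.single_smul, -Complex.coe_smul]
  · have hh : w.head ≠ ((b, a), l₂) := fun h => hw (by rw [h])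
    rw [hT.2.2.2 w hw, if_neg hh, add_zero, MBasis.start, if_neg hw]
    exact (fockGraph r J L).zero_mem

theorem creation_add_adjoint_mem_fockGraph
    (hT : IsMFCreation β₁ a b l₁ hab T) (hS : IsMFCreation β₂ b a l₂ hba S)
    (he₁ : IsFreeCreation (a, b, l₁) e₁) (he₂ : IsFreeCreation (b, a, l₂) e₂)
    (hZ : IsBlockOp a b ((Real.sqrt β₁ : ℂ) • e₁ + (Real.sqrt β₂ : ℂ) • adjoint e₂) Z)
    {x : MSpace r J L} {y : FockR r (Fin r × Fin r × L)} (hxy : (x, y) ∈ fockGraph r J L) :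
    ((T + adjoint S) x, Z y) ∈ fockGraph r J L := by
  suffices h : fockGraph r J L ≤ (fockGraph r J L).comap ((T + adjoint S).prodMap Z).toLinearMap
    from h hxy
  refine Submodule.span_le.mpr ?_
  rintro _ ⟨k | w, rfl⟩
  · exact creation_add_adjoint_vac_mem_fockGraph hT hS he₁ he₂ hZ k
  · exact creation_add_adjoint_wvec_mem_fockGraph hT hS he₁ he₂ hZ w

end Step

section Graph

variable {r : ℕ} {J : Set (Fin r × Fin r)} {L : Type*}

theorem vac_fockDelta_mem_fockGraph (k : Fin r) :
    (vac k, fockDelta k) ∈ fockGraph r J L := by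
  rw [fockDelta_eq_single, fvac_eq_fvec_nil]
  exact mvec_toFock_mem_fockGraph (.inl k)

open Classical in
theorem inner_mvec_mvec (i j : MBasis r J L) : ⟪mvec i, mvec j⟫_ℂ = if i = j then 1 else 0 := by
  rw [mvec_eq_lpBasis, mvec_eq_lpBasis, orthonormal_iff_ite.mp (lpBasis _).orthonormal]

open Classical in
theorem inner_fvec_fvec {I : Type*} (a c : FBasis I) :
    ⟪fvec a, fvec c⟫_ℂ = if a = c then 1 else 0 := by
  rw [fvec_eq_lpBasis, fvec_eq_lpBasis, orthonormal_iff_ite.mp (lpBasis _).orthonormal]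

theorem inner_vac_mvec_eq_inner_fockDelta_toFock (k : Fin r) (j : MBasis r J L) :
    ⟪vac k, mvec j⟫_ℂ = ⟪fockDelta k, j.toFock⟫_ℂ := by
  classical
  rw [vac, inner_mvec_mvec, fockDelta_eq_single, PiLp.inner_single_left, MBasis.toFock]
  rcases j with k' | w
  · by_cases hk : k' = k
    · subst hk
      simp only [MBasis.start, MBasis.letters, fvac_eq_fvec_nil, PiLp.single_eq_same,
        inner_fvec_fvec]
    · simp [MBasis.start, Ne.symm hk]
  · by_cases hk : w.head.1.1 = k
    · subst hk
      simp [MBasis.start, MBasis.letters, fvac, FBasis.equivList, inner_fvec_fvec]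
    · simp [MBasis.start, hk]

theorem inner_vac_eq_inner_fockDelta_of_mem {p : MSpace r J L × FockR r (Fin r × Fin r × L)}
    (h : p ∈ fockGraph r J L) (k : Fin r) : ⟪vac k, p.1⟫_ℂ = ⟪fockDelta k, p.2⟫_ℂ := by
  induction h using Submodule.span_induction with
  | mem p hp =>
    obtain ⟨j, rfl⟩ := hp
    exact inner_vac_mvec_eq_inner_fockDelta_toFock k j
  | zero => simp
  | add p q _ _ hp hq => simp [hp, hq]
  | smul c p _ hp => simp [hp]

end Graph

theorem ofFn_prod_apply_mem {R E F : Type*} [Semiring R] [TopologicalSpace E] [AddCommMonoid E]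
    [Module R E] [TopologicalSpace F] [AddCommMonoid F] [Module R F] {P : Set (E × F)} {m : ℕ}
    (A : Fin m → E →L[R] E) (B : Fin m → F →L[R] F)
    (h : ∀ j x y, (x, y) ∈ P → (A j x, B j y) ∈ P) {x : E} {y : F} (hxy : (x, y) ∈ P) :
    ((List.ofFn A).prod x, (List.ofFn B).prod y) ∈ P := by
  induction m with
  | zero => simpa using hxy
  | succ m ih =>
    simp only [List.ofFn_succ, List.prod_cons]
    exact h 0 _ _ (ih _ _ fun j => h j.succ)

/-- The label set is `L = U ⊕ U`, with `u′ = Sum.inl u` and `u″ = Sum.inr u`. -/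
theorem matricialRCircular_matrix_realization_general
    (r : ℕ) (U : Type)
    (b : Fin r → Fin r → U → ℝ)
    (C : (p q : Fin r) → (U ⊕ U) → (MSpace r Set.univ (U ⊕ U) →L[ℂ] MSpace r Set.univ (U ⊕ U)))
    (hC : ∀ p q l, IsMFCreation (b p q (Sum.elim id id l)) p q l (Set.mem_univ _) (C p q l))
    (ell : (Fin r × Fin r × (U ⊕ U)) →
      (FSpace (Fin r × Fin r × (U ⊕ U)) →L[ℂ] FSpace (Fin r × Fin r × (U ⊕ U))))
    (hell : ∀ i, IsFreeCreation i (ell i))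
    (Gop : (p q : Fin r) → U →
      (FockR r (Fin r × Fin r × (U ⊕ U)) →L[ℂ] FockR r (Fin r × Fin r × (U ⊕ U))))
    (hGop : ∀ p q u ξ k,
      tupComp (Gop p q u ξ) k = if k = p then
        (((Real.sqrt (b p q u) : ℂ) • ell (p, q, Sum.inl u)
          + (Real.sqrt (b q p u) : ℂ) • ContinuousLinearMap.adjoint (ell (q, p, Sum.inr u)))
        (tupComp ξ q)) else 0) :
    ∀ (k : Fin r) (m : ℕ), 1 ≤ m → ∀ (pp qq : Fin m → Fin r) (uu : Fin m → U)
      (ε : Fin m → Bool),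
      PsiM k (List.ofFn (fun j => sOp (ε j)
        (C (pp j) (qq j) (Sum.inl (uu j))
          + ContinuousLinearMap.adjoint (C (qq j) (pp j) (Sum.inr (uu j)))))).prod
      = PhiR k (List.ofFn (fun j => sOp (ε j) (Gop (pp j) (qq j) (uu j)))).prod := by
  intro k m _ pp qq uu ε
  have hstep : ∀ (j : Fin m) x y, (x, y) ∈ fockGraph r Set.univ (U ⊕ U) →
      (sOp (ε j) (C (pp j) (qq j) (Sum.inl (uu j))
          + ContinuousLinearMap.adjoint (C (qq j) (pp j) (Sum.inr (uu j)))) x,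
        sOp (ε j) (Gop (pp j) (qq j) (uu j)) y) ∈ fockGraph r Set.univ (U ⊕ U) := by
    intro j x y hxy
    have hG := isBlockOp_of_tupComp (hGop (pp j) (qq j) (uu j))
    have hT := hC (pp j) (qq j) (.inl (uu j))
    have hS := hC (qq j) (pp j) (.inr (uu j))
    cases ε j with
    | true => exact creation_add_adjoint_mem_fockGraph hT hS (hell _) (hell _) hG hxy
    | false =>
      rw [sOp, if_neg Bool.false_ne_true, map_add, ContinuousLinearMap.adjoint_adjoint, add_comm]
      exact creation_add_adjoint_mem_fockGraph hS hT (hell _) (hell _) hG.adjoint_real_smul hxy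
  exact inner_vac_eq_inner_fockDelta_of_mem
    (ofFn_prod_apply_mem _ _ hstep (vac_fockDelta_mem_fockGraph k)) k

/-- the joint *-distributions of the matricial `R`-circular operators
`ζ_{p,q}(u) = ℘_{p,q}(u′) + ℘_{q,p}(u″)*` in the states `Ψ_k` agree with those of the operators
`G_{p,q}(u) = g(p,q,u) ⊗ e(p,q)` in the states `Φ_k`, where
`g(p,q,u) = √b_{p,q}(u)·ℓ(p,q,u′) + √b_{q,p}(u)·ℓ(q,p,u″)*` on the full Fock space.
Here the label set is `L = U ⊕ U`, `u′ = Sum.inl u`, `u″ = Sum.inr u`. -/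
theorem matricialRCircular_matrix_realization
    (r : ℕ) (hr : 1 ≤ r) (U : Type) [Finite U]
    (b : Fin r → Fin r → U → ℝ) (hb : ∀ p q u, 0 ≤ b p q u)
    (C : (p q : Fin r) → (U ⊕ U) → (MSpace r Set.univ (U ⊕ U) →L[ℂ] MSpace r Set.univ (U ⊕ U)))
    (hC : ∀ p q l, IsMFCreation (b p q (Sum.elim id id l)) p q l (Set.mem_univ _) (C p q l))
    (ell : (Fin r × Fin r × (U ⊕ U)) →
      (FSpace (Fin r × Fin r × (U ⊕ U)) →L[ℂ] FSpace (Fin r × Fin r × (U ⊕ U))))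
    (hell : ∀ i, IsFreeCreation i (ell i))
    (Gop : (p q : Fin r) → U →
      (FockR r (Fin r × Fin r × (U ⊕ U)) →L[ℂ] FockR r (Fin r × Fin r × (U ⊕ U))))
    (hGop : ∀ p q u ξ k,
      tupComp (Gop p q u ξ) k = if k = p then
        (((Real.sqrt (b p q u) : ℂ) • ell (p, q, Sum.inl u)
          + (Real.sqrt (b q p u) : ℂ) • ContinuousLinearMap.adjoint (ell (q, p, Sum.inr u)))
        (tupComp ξ q)) else 0) :
    ∀ (k : Fin r) (m : ℕ), 1 ≤ m → ∀ (pp qq : Fin m → Fin r) (uu : Fin m → U)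
      (ε : Fin m → Bool),
      PsiM k (List.ofFn (fun j => sOp (ε j)
        (C (pp j) (qq j) (Sum.inl (uu j))
          + ContinuousLinearMap.adjoint (C (qq j) (pp j) (Sum.inr (uu j)))))).prod
      = PhiR k (List.ofFn (fun j => sOp (ε j) (Gop (pp j) (qq j) (uu j)))).prod :=
  matricialRCircular_matrix_realization_general r U b C hC ell hell Gop hGop
end

section
/- Let p ≠ q in [r], u ∈ U, and suppose b := b_{p,q}(u) = b_{q,p}(u) > 0. On the full Fock space F({1,2}) with vacuum state φ, let c = √b·(ℓ(1) + ℓ(2)*), let P₁ be the orthogonal projection onto the closed span of the word basis vectors δ_w with w of odd length, and P₂ the orthogonal projection onto the closed span of δ_Ω together with the δ_w with w of even positive length. Then for every m ≥ 1, all x₁,…,x_m ∈ {ζ_{p,q}(u), ζ_{q,p}(u)} and all ε₁,…,ε_m ∈ {1,*}: Ψ_q(x₁^{ε₁}⋯x_m^{ε_m}) = φ(y₁^{ε₁}⋯y_m^{ε_m}), where y_j = cP₂ if x_j = ζ_{p,q}(u) and y_j = cP₁ if x_j = ζ_{q,p}(u); that is, the joint *-distribution of the pair {ζ_{p,q}(u),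 ζ_{q,p}(u)} with respect to Ψ_q agrees with that of the pair {cP₂, cP₁} with respect to φ. -/
set_option synthInstance.maxHeartbeats 400000
set_option maxHeartbeats 1000000

open scoped InnerProductSpace lp
open ContinuousLinearMap

noncomputable section

section HilbertSpace

variable {H K : Type*} [NormedAddCommGroup H] [InnerProductSpace ℂ H] [CompleteSpace H]
  [NormedAddCommGroup K] [InnerProductSpace ℂ K] [CompleteSpace K]

/-- The second condition makes the relation closed under adjoints. -/
def Intertwines (V : H →ₗᵢ[ℂ] K) (S : H →L[ℂ] H) (T : K →L[ℂ] K) : Prop :=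
  T ∘L V.toContinuousLinearMap = V.toContinuousLinearMap ∘L S ∧
    adjoint T ∘L V.toContinuousLinearMap = V.toContinuousLinearMap ∘L adjoint S

namespace Intertwines

variable {V : H →ₗᵢ[ℂ] K} {S S' : H →L[ℂ] H} {T T' : K →L[ℂ] K}

theorem adjoint (h : Intertwines V S T) : Intertwines V (adjoint S) (adjoint T) :=
  ⟨h.2, by simpa only [adjoint_adjoint] using h.1⟩

theorem add (h : Intertwines V S T) (h' : Intertwines V S' T') :
    Intertwines V (S + S') (T + T') := by
  constructor <;> simp only [map_add, add_comp, comp_add, h.1, h.2, h'.1, h'.2]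

theorem one : Intertwines V 1 1 := by
  constructor <;> ext <;> simp [one_def, adjoint_id]

theorem mul (h : Intertwines V S T) (h' : Intertwines V S' T') :
    Intertwines V (S * S') (T * T') := by
  constructor <;> simp only [mul_def, adjoint_comp]
  · rw [ContinuousLinearMap.comp_assoc, h'.1, ← ContinuousLinearMap.comp_assoc, h.1,
      ContinuousLinearMap.comp_assoc]
  · rw [ContinuousLinearMap.comp_assoc, h.2, ← ContinuousLinearMap.comp_assoc, h'.2,
      ContinuousLinearMap.comp_assoc]

theorem sOp (h : Intertwines V S T) (ε : Bool) : Intertwines V (sOp ε S) (sOp ε T) := by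
  cases ε
  exacts [h.adjoint, h]

theorem list_ofFn_prod {n : ℕ} {S : Fin n → H →L[ℂ] H} {T : Fin n → K →L[ℂ] K}
    (h : ∀ j, Intertwines V (S j) (T j)) :
    Intertwines V (List.ofFn S).prod (List.ofFn T).prod := by
  induction n with
  | zero => simpa using one
  | succ n ih =>
    simp only [List.ofFn_succ, List.prod_cons]
    exact (h 0).mul (ih fun j => h j.succ)

theorem inner_map_apply_map (h : Intertwines V S T) (x : H) : ⟪V x, T (V x)⟫_ℂ = ⟪x, S x⟫_ℂ := by
  have hx : T (V x) = V (S x) := congr($(h.1) x)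
  rw [hx, V.inner_map_map]

end Intertwines

end HilbertSpace

section L2

variable {ι κ : Type*} [DecidableEq ι]

theorem lp.ext_single_one {F : Type*} [NormedAddCommGroup F] [NormedSpace ℂ F]
    {f g : ℓ²(ι, ℂ) →L[ℂ] F} (h : ∀ i, f (lp.single 2 i 1) = g (lp.single 2 i 1)) : f = g :=
  lp.ext_continuousLinearMap ENNReal.ofNat_ne_top fun i => ext_ring (by simpa using h i)

theorem lp.adjoint_apply_apply (T : ℓ²(ι, ℂ) →L[ℂ] ℓ²(κ, ℂ)) (y : ℓ²(κ, ℂ)) (i : ι) :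
    ContinuousLinearMap.adjoint T y i = ⟪T (lp.single 2 i 1), y⟫_ℂ := by
  rw [← adjoint_inner_right, lp.inner_single_left]
  simp

theorem lp.isSelfAdjoint_of_apply_single {T : ℓ²(ι, ℂ) →L[ℂ] ℓ²(ι, ℂ)} (c : ι → ℝ)
    (h : ∀ i, T (lp.single 2 i 1) = (c i : ℂ) • lp.single 2 i 1) : IsSelfAdjoint T := by
  rw [isSelfAdjoint_iff']
  refine lp.ext_single_one fun i => lp.ext (funext fun j => ?_)
  rw [lp.adjoint_apply_apply, h, h, inner_smul_left, lp.inner_single_left, lp.coeFn_smul,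
    Pi.smul_apply]
  by_cases hij : j = i
  · subst hij; simp
  · simp [lp.single_apply, hij]

variable [DecidableEq κ]

theorem lp.orthonormal_single_comp {f : ι → κ} (hf : Function.Injective f) :
    Orthonormal ℂ fun i => (lp.single 2 (f i) 1 : ℓ²(κ, ℂ)) := by
  rw [orthonormal_iff_ite]
  intro i j
  simp [lp.inner_single_left, lp.single_apply, Pi.single_apply, hf.eq_iff]

def lp.embedding {f : ι → κ} (hf : Function.Injective f) : ℓ²(ι, ℂ) →ₗᵢ[ℂ] ℓ²(κ, ℂ) :=
  (lp.orthonormal_single_comp hf).orthogonalFamily.linearIsometry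

variable {f : ι → κ} (hf : Function.Injective f)

theorem lp.embedding_single (i : ι) : lp.embedding hf (lp.single 2 i 1) = lp.single 2 (f i) 1 := by
  simp [lp.embedding, OrthogonalFamily.linearIsometry_apply_single]

theorem lp.adjoint_embedding_apply (y : ℓ²(κ, ℂ)) (i : ι) :
    ContinuousLinearMap.adjoint (lp.embedding hf).toContinuousLinearMap y i = y (f i) := by
  rw [lp.adjoint_apply_apply, LinearIsometry.coe_toContinuousLinearMap, lp.embedding_single,
    lp.inner_single_left]
  simp

/-- `h_compl` says that `T` preserves the orthogonal complement of the range of `V`; together with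
`h_range` this gives `V† T = S V†`, whose adjoint is the second half of `Intertwines`. -/
theorem lp.intertwines_embedding {S : ℓ²(ι, ℂ) →L[ℂ] ℓ²(ι, ℂ)} {T : ℓ²(κ, ℂ) →L[ℂ] ℓ²(κ, ℂ)}
    (h_range : ∀ i, T (lp.single 2 (f i) 1) = lp.embedding hf (S (lp.single 2 i 1)))
    (h_compl : ∀ x ∉ Set.range f, ∀ i, T (lp.single 2 x 1) (f i) = 0) :
    Intertwines (lp.embedding hf) S T := by
  set V := (lp.embedding hf).toContinuousLinearMap
  have hVV : ∀ y, ContinuousLinearMap.adjoint V (lp.embedding hf y) = y := fun y =>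
    congr($((isometry_iff_adjoint_comp_self V).1 (lp.embedding hf).isometry) y)
  have hTV : T ∘L V = V ∘L S :=
    lp.ext_single_one fun i => by simpa [V, lp.embedding_single] using h_range i
  have hVT : ContinuousLinearMap.adjoint V ∘L T = S ∘L ContinuousLinearMap.adjoint V := by
    refine lp.ext_single_one fun x => ?_
    by_cases hx : x ∈ Set.range f
    · obtain ⟨i, rfl⟩ := hx
      rw [ContinuousLinearMap.comp_apply, ContinuousLinearMap.comp_apply, h_range, hVV,
        ← lp.embedding_single hf, hVV]
    · refine lp.ext (funext fun i => ?_)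
      rw [ContinuousLinearMap.comp_apply, lp.adjoint_embedding_apply, h_compl x hx i,
        ContinuousLinearMap.comp_apply]
      have hVx : ContinuousLinearMap.adjoint V (lp.single 2 x 1) = 0 := by
        refine lp.ext (funext fun j => ?_)
        rw [lp.adjoint_embedding_apply, lp.single_apply_ne _ _ _ fun h => hx ⟨j, h⟩]
        rfl
      rw [hVx, map_zero]
      rfl
  refine ⟨hTV, ?_⟩
  simpa only [adjoint_comp, adjoint_adjoint] using congr(ContinuousLinearMap.adjoint $hVT)

end L2

section Fock

variable {I : Type*}

def FBasis.equivList_s11 : FBasis I ≃ List I where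
  toFun
    | .inl _ => []
    | .inr w => w.1
  invFun
    | [] => .inl ()
    | a :: t => .inr ⟨a :: t, List.cons_ne_nil a t⟩
  left_inv := by rintro (⟨⟩ | ⟨_ | ⟨a, t⟩, h⟩) <;> first | rfl | exact absurd rfl h
  right_inv := by rintro (_ | ⟨a, t⟩) <;> rfl

abbrev FBasis.ofList (w : List I) : FBasis I := FBasis.equivList_s11.symm w

theorem fvec_eq_single [DecidableEq (FBasis I)] (i : FBasis I) : fvec i = lp.single 2 i 1 := by
  unfold fvec
  congr!

theorem fvec_ofList_of_ne_nil {w : List I} (hw : w ≠ []) :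
    fvec (FBasis.ofList w) = fword w hw := by
  cases w
  · contradiction
  · rfl

theorem IsFreeCreation.apply_ofList {i : I} {ℓ : FSpace I →L[ℂ] FSpace I}
    (h : IsFreeCreation i ℓ) (w : List I) : ℓ (fvec (.ofList w)) = fvec (.ofList (i :: w)) := by
  cases w
  · exact h.1
  · exact h.2 _ _

def IsParityProj (k : ℕ) (P : FSpace I →L[ℂ] FSpace I) : Prop :=
  ∀ w : List I, P (fvec (.ofList w)) = if w.length % 2 = k % 2 then fvec (.ofList w) else 0

variable {P : FSpace I →L[ℂ] FSpace I}

theorem isParityProj_zero (h : P fvac = fvac ∧ ∀ (w : List I) (hw : w ≠ []),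
    P (fword w hw) = if Odd w.length then 0 else fword w hw) : IsParityProj 0 P := by
  rintro (_ | ⟨a, t⟩)
  · exact h.1
  · rw [fvec_ofList_of_ne_nil (List.cons_ne_nil a t), h.2]
    split_ifs <;> grind

theorem isParityProj_one (h : P fvac = 0 ∧ ∀ (w : List I) (hw : w ≠ []),
    P (fword w hw) = if Odd w.length then fword w hw else 0) : IsParityProj 1 P := by
  rintro (_ | ⟨a, t⟩)
  · exact h.1
  · rw [fvec_ofList_of_ne_nil (List.cons_ne_nil a t), h.2]
    split_ifs <;> grind

namespace IsParityProj

variable {k : ℕ}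

theorem add_two (hP : IsParityProj k P) : IsParityProj (k + 2) P := by
  simpa only [IsParityProj, Nat.add_mod_right] using hP

theorem isSelfAdjoint (hP : IsParityProj k P) : IsSelfAdjoint P := by
  classical
  refine lp.isSelfAdjoint_of_apply_single
    (fun j => if (FBasis.equivList_s11 j).length % 2 = k % 2 then 1 else 0) fun j => ?_
  obtain ⟨w, rfl⟩ := FBasis.equivList_s11.symm.surjective j
  rw [← fvec_eq_single, hP w, Equiv.apply_symm_apply]
  split_ifs <;> simp

variable {i : I} {ℓ : FSpace I →L[ℂ] FSpace I}

theorem smul_creation_mul_apply (hP : IsParityProj k P) (hℓ : IsFreeCreation i ℓ) (c : ℂ)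
    (w : List I) : (c • ℓ * P) (fvec (.ofList w))
      = if w.length % 2 = k % 2 then c • fvec (.ofList (i :: w)) else 0 := by
  rw [mul_apply_eq_comp, hP w]
  split_ifs <;> simp [hℓ.apply_ofList]

theorem smul_mul_creation_apply (hP : IsParityProj (k + 1) P) (hℓ : IsFreeCreation i ℓ) (c : ℂ)
    (w : List I) : (c • P * ℓ) (fvec (.ofList w))
      = if w.length % 2 = k % 2 then c • fvec (.ofList (i :: w)) else 0 := by
  rw [mul_apply_eq_comp, hℓ.apply_ofList, smul_apply, hP (i :: w), List.length_cons]
  split_ifs <;> first | omega | simp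

end IsParityProj

end Fock

section MF

variable {r : ℕ} {J : Set (Fin r × Fin r)} {L : Type*}

attribute [ext] MWord

theorem mvec_eq_single [DecidableEq (MBasis r J L)] (i : MBasis r J L) :
    mvec i = lp.single 2 i 1 := by
  unfold mvec
  congr!

def MBasis.startIdx : MBasis r J L → Fin r
  | .inl k => k
  | .inr w => w.head.1.1

def MBasis.prepend (x : MLetter r L) (hx : x.1 ∈ J) :
    (β : MBasis r J L) → x.1.2 = β.startIdx → MWord r J L
  | .inl _, _ => MWord.single x hx
  | .inr w, h => MWord.cons x hx w h

theorem MBasis.prepend_head {x : MLetter r L} {hx : x.1 ∈ J} (β : MBasis r J L)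
    (h : x.1.2 = β.startIdx) : (β.prepend x hx h).head = x := by
  cases β <;> rfl

theorem MBasis.prepend_inj {x x' : MLetter r L} {hx : x.1 ∈ J} {hx' : x'.1 ∈ J}
    {β β' : MBasis r J L} {h : x.1.2 = β.startIdx} {h' : x'.1.2 = β'.startIdx}
    (he : β.prepend x hx h = β'.prepend x' hx' h') : x = x' ∧ β = β' := by
  have hxx : x = x' := by simpa only [MBasis.prepend_head] using congrArg MWord.head he
  refine ⟨hxx, ?_⟩
  subst hxx
  have ht := congrArg MWord.tail he
  rcases β with k | w <;> rcases β' with k' | w' <;>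
    simp only [MBasis.prepend, MWord.single, MWord.cons, reduceCtorEq] at ht
  · exact congrArg Sum.inl (h.symm.trans h')
  · obtain ⟨h1, h2⟩ := List.cons.inj ht
    exact congrArg Sum.inr (MWord.ext h1 h2)

theorem IsMFCreation.apply_mvec {b : ℝ} {p q : Fin r} {l : L} {hpq : (p, q) ∈ J}
    {T : MSpace r J L →L[ℂ] MSpace r J L} (hT : IsMFCreation b p q l hpq T) (β : MBasis r J L) :
    T (mvec β) = if h : β.startIdx = q then
      (√b : ℂ) • wvec (β.prepend ((p, q), l) hpq h.symm) else 0 := by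
  rcases β with k | w <;> split_ifs with h
  · obtain rfl : k = q := h
    exact hT.1
  · exact hT.2.1 k h
  · exact hT.2.2.1 w h
  · exact hT.2.2.2 w h

end MF

section AltWord

variable {r : ℕ} {L I : Type*} (p q : Fin r) (lab : I → L)

/-- `altWord p q lab w` is the chained word attached to the Fock word `w`: its letters carry the
labels `lab wₖ`, and its index pairs alternate `…, (p, q), (q, p), (p, q)` so that it ends in `q`
(the empty word goes to `Ω_q`). `altIdx p q n` is the first index of the image of a word of
length `n`. -/
def altIdx (n : ℕ) : Fin r := if n % 2 = 0 then q else p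

theorem altIdx_congr {m n : ℕ} (h : m % 2 = n % 2) : altIdx p q m = altIdx p q n := by
  simp only [altIdx, h]

theorem altIdx_eq_altIdx_iff (hpq : p ≠ q) {m n : ℕ} :
    altIdx p q m = altIdx p q n ↔ m % 2 = n % 2 := by
  unfold altIdx
  split_ifs <;> simp [hpq, hpq.symm] <;> omega

def altWord : List I → MBasis r Set.univ L
  | [] => .inl q
  | a :: t => .inr ((altWord t).prepend
      ((altIdx p q (t.length + 1), (altWord t).startIdx), lab a) (Set.mem_univ _) rfl)

theorem startIdx_altWord : ∀ w : List I, (altWord p q lab w).startIdx = altIdx p q w.length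
  | [] => by simp [altWord, MBasis.startIdx, altIdx]
  | _ :: _ => by simp only [altWord, MBasis.startIdx, MBasis.prepend_head, List.length_cons]

variable {lab}

theorem altWord_injective (hlab : Function.Injective lab) : Function.Injective (altWord p q lab) := by
  intro w w' h
  induction w generalizing w' with
  | nil => cases w' <;> simp_all [altWord]
  | cons a t ih =>
    cases w' with
    | nil => simp [altWord] at h
    | cons a' t' =>
      obtain ⟨hx, hβ⟩ := MBasis.prepend_inj (Sum.inr.inj h)
      rw [hlab (congrArg Prod.snd hx), ih hβ]

open Classical in
def altEmbedding (hlab : Function.Injective lab) : FSpace I →ₗᵢ[ℂ] MSpace r Set.univ L :=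
  lp.embedding ((altWord_injective p q hlab).comp FBasis.equivList_s11.injective)

theorem altEmbedding_apply (hlab : Function.Injective lab) (w : List I) :
    altEmbedding p q hlab (fvec (.ofList w)) = mvec (altWord p q lab w) := by
  classical
  rw [fvec_eq_single, mvec_eq_single, altEmbedding]
  convert lp.embedding_single _ _ using 2
  simp

end AltWord

section Creation

variable {r : ℕ} {L I : Type*} {p q : Fin r} {lab : I → L} {β : ℝ}
  {T : MSpace r Set.univ L →L[ℂ] MSpace r Set.univ L}

theorem IsMFCreation.apply_altWord (hpq : p ≠ q) {k : ℕ} {i : I}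
    (hT : IsMFCreation β (altIdx p q (k + 1)) (altIdx p q k) (lab i) (Set.mem_univ _) T)
    (w : List I) : T (mvec (altWord p q lab w))
      = if w.length % 2 = k % 2 then (√β : ℂ) • mvec (altWord p q lab (i :: w)) else 0 := by
  rw [hT.apply_mvec]
  by_cases hw : w.length % 2 = k % 2
  · have hstart : (altWord p q lab w).startIdx = altIdx p q k :=
      (startIdx_altWord p q lab w).trans ((altIdx_eq_altIdx_iff p q hpq).2 hw)
    rw [dif_pos hstart, if_pos hw]
    have hnext : altIdx p q (k + 1) = altIdx p q (w.length + 1) := altIdx_congr p q (by omega)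
    simp only [altWord, wvec]
    congr 5
    exact Prod.ext hnext hstart.symm
  · rw [dif_neg (by rw [startIdx_altWord, altIdx_eq_altIdx_iff p q hpq]; exact hw), if_neg hw]

theorem IsMFCreation.apply_mvec_apply_altWord_of_notMem {p' q' : Fin r} {l : L}
    (hT : IsMFCreation β p' q' l (Set.mem_univ _) T) {x : MBasis r Set.univ L}
    (hx : x ∉ Set.range (altWord p q lab)) (w : List I) :
    T (mvec x) (altWord p q lab w) = 0 := by
  classical
  rw [hT.apply_mvec]
  split_ifs with h
  · rw [wvec, mvec_eq_single, lp.coeFn_smul, Pi.smul_apply, lp.single_apply_ne, smul_zero]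
    intro he
    cases w with
    | nil => cases he
    | cons a t => exact hx ⟨t, (MBasis.prepend_inj (Sum.inr.inj he)).2⟩
  · rfl

open Classical in
theorem intertwines_creation (hpq : p ≠ q) (hlab : Function.Injective lab) {k : ℕ} {i : I}
    (hT : IsMFCreation β (altIdx p q (k + 1)) (altIdx p q k) (lab i) (Set.mem_univ _) T)
    {S : FSpace I →L[ℂ] FSpace I}
    (hS : ∀ w : List I, S (fvec (.ofList w))
      = if w.length % 2 = k % 2 then (√β : ℂ) • fvec (.ofList (i :: w)) else 0) :
    Intertwines (altEmbedding p q hlab) S T := by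
  apply lp.intertwines_embedding
  · intro z
    obtain ⟨w, rfl⟩ := FBasis.equivList_s11.symm.surjective z
    rw [← fvec_eq_single, ← mvec_eq_single, Function.comp_apply, Equiv.apply_symm_apply]
    change T (mvec (altWord p q lab w)) = altEmbedding p q hlab (S (fvec (.ofList w)))
    rw [hT.apply_altWord hpq, hS]
    split_ifs
    · rw [map_smul, altEmbedding_apply]
    · rw [map_zero]
  · intro x hx z
    rw [← mvec_eq_single]
    exact hT.apply_mvec_apply_altWord_of_notMem (by rwa [EquivLike.range_comp] at hx) _

end Creation

theorem intertwines_rCircular {r : ℕ} {L : Type*} {p q : Fin r} {β : ℝ} (hpq : p ≠ q)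
    {lab : Fin 2 → L} (hlab : Function.Injective lab) (k : ℕ)
    {A B : MSpace r Set.univ L →L[ℂ] MSpace r Set.univ L}
    (hA : IsMFCreation β (altIdx p q (k + 1)) (altIdx p q k) (lab 0) (Set.mem_univ _) A)
    (hB : IsMFCreation β (altIdx p q (k + 2)) (altIdx p q (k + 1)) (lab 1) (Set.mem_univ _) B)
    {ℓ : Fin 2 → FSpace (Fin 2) →L[ℂ] FSpace (Fin 2)} (hℓ : ∀ i, IsFreeCreation i (ℓ i))
    {P : FSpace (Fin 2) →L[ℂ] FSpace (Fin 2)} (hP : IsParityProj k P) :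
    Intertwines (altEmbedding p q hlab) (((√β : ℂ) • (ℓ 0 + adjoint (ℓ 1))) * P)
      (A + adjoint B) := by
  have hA' := intertwines_creation hpq hlab hA (hP.smul_creation_mul_apply (hℓ 0) _)
  have hB' := intertwines_creation hpq hlab hB (hP.add_two.smul_mul_creation_apply (hℓ 1) _)
  convert hA'.add hB'.adjoint using 1
  simp only [← star_eq_adjoint, star_mul, star_smul, hP.isSelfAdjoint.star_eq, Complex.star_def,
    Complex.conj_ofReal, smul_add, add_mul, smul_mul_assoc]

end

theorem matricialRCircular_pair_oddEven_realization_general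
    (r : ℕ) (U : Type) (u : U) (p q : Fin r) (hpq : p ≠ q)
    (b : Fin r → Fin r → U → ℝ)
    (hbsym : b p q u = b q p u)
    (C : (p' q' : Fin r) → (U ⊕ U) →
      (MSpace r Set.univ (U ⊕ U) →L[ℂ] MSpace r Set.univ (U ⊕ U)))
    (hC : ∀ p' q' l, IsMFCreation (b p' q' (Sum.elim id id l)) p' q' l (Set.mem_univ _)
      (C p' q' l))
    (ell : Fin 2 → (FSpace (Fin 2) →L[ℂ] FSpace (Fin 2)))
    (hell : ∀ i, IsFreeCreation i (ell i))
    (P₁ P₂ : FSpace (Fin 2) →L[ℂ] FSpace (Fin 2))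
    (hP₁ : P₁ (fvac : FSpace (Fin 2)) = 0 ∧ ∀ (w : List (Fin 2)) (hw : w ≠ []),
      P₁ (fword w hw) = if Odd w.length then fword w hw else 0)
    (hP₂ : P₂ (fvac : FSpace (Fin 2)) = fvac ∧ ∀ (w : List (Fin 2)) (hw : w ≠ []),
      P₂ (fword w hw) = if Odd w.length then 0 else fword w hw) :
    ∀ (m : ℕ), 1 ≤ m → ∀ (choose : Fin m → Bool) (ε : Fin m → Bool),
      PsiM q (List.ofFn (fun j => sOp (ε j)
        (if choose j then
          C p q (Sum.inl u) + ContinuousLinearMap.adjoint (C q p (Sum.inr u))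
         else
          C q p (Sum.inl u) + ContinuousLinearMap.adjoint (C p q (Sum.inr u))))).prod
      = fockState (List.ofFn (fun j => sOp (ε j)
          (if choose j then
            ((Real.sqrt (b p q u) : ℂ) • (ell 0 + ContinuousLinearMap.adjoint (ell 1))) * P₂
           else
            ((Real.sqrt (b p q u) : ℂ) • (ell 0 + ContinuousLinearMap.adjoint (ell 1))) * P₁))).prod := by
  intro m _ choose ε
  have hlab : Function.Injective ![(Sum.inl u : U ⊕ U), Sum.inr u] := by
    intro i j h
    fin_cases i <;> fin_cases j <;> simp_all
  have hζ : ∀ c : Bool, Intertwines (altEmbedding p q hlab)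
      (if c then ((√(b p q u) : ℂ) • (ell 0 + adjoint (ell 1))) * P₂
        else ((√(b p q u) : ℂ) • (ell 0 + adjoint (ell 1))) * P₁)
      (if c then C p q (Sum.inl u) + adjoint (C q p (Sum.inr u))
        else C q p (Sum.inl u) + adjoint (C p q (Sum.inr u))) := by
    rintro (_ | _)
    · exact intertwines_rCircular hpq hlab 1 (hbsym ▸ hC q p (Sum.inl u)) (hC p q (Sum.inr u))
        hell (isParityProj_one hP₁)
    · exact intertwines_rCircular hpq hlab 0 (hC p q (Sum.inl u)) (hbsym ▸ hC q p (Sum.inr u))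
        hell (isParityProj_zero hP₂)
  have hvac : altEmbedding p q hlab fvac = vac q := altEmbedding_apply p q hlab []
  have h := (Intertwines.list_ofFn_prod fun j => (hζ (choose j)).sOp (ε j)).inner_map_apply_map fvac
  rw [hvac] at h
  exact h

/-- for `p ≠ q` with `b = b_{p,q}(u) = b_{q,p}(u) > 0`, the joint
*-distribution of the pair `{ζ_{p,q}(u), ζ_{q,p}(u)}` w.r.t. `Ψ_q` agrees with that of the
pair `{cP₂, cP₁}` w.r.t. the vacuum state, where `c = √b·(ℓ(1) + ℓ(2)*)` on `F({1,2})` and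
`P₁`, `P₂` are the orthogonal projections onto the odd and even subspaces. -/
theorem matricialRCircular_pair_oddEven_realization
    (r : ℕ) (hr : 1 ≤ r) (U : Type) [Finite U] (u : U) (p q : Fin r) (hpq : p ≠ q)
    (b : Fin r → Fin r → U → ℝ) (hb : ∀ p' q' u', 0 ≤ b p' q' u')
    (hbsym : b p q u = b q p u) (hbpos : 0 < b p q u)
    (C : (p' q' : Fin r) → (U ⊕ U) →
      (MSpace r Set.univ (U ⊕ U) →L[ℂ] MSpace r Set.univ (U ⊕ U)))
    (hC : ∀ p' q' l, IsMFCreation (b p' q' (Sum.elim id id l)) p' q' l (Set.mem_univ _)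
      (C p' q' l))
    (ell : Fin 2 → (FSpace (Fin 2) →L[ℂ] FSpace (Fin 2)))
    (hell : ∀ i, IsFreeCreation i (ell i))
    (P₁ P₂ : FSpace (Fin 2) →L[ℂ] FSpace (Fin 2))
    (hP₁ : P₁ (fvac : FSpace (Fin 2)) = 0 ∧ ∀ (w : List (Fin 2)) (hw : w ≠ []),
      P₁ (fword w hw) = if Odd w.length then fword w hw else 0)
    (hP₂ : P₂ (fvac : FSpace (Fin 2)) = fvac ∧ ∀ (w : List (Fin 2)) (hw : w ≠ []),
      P₂ (fword w hw) = if Odd w.length then 0 else fword w hw) :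
    ∀ (m : ℕ), 1 ≤ m → ∀ (choose : Fin m → Bool) (ε : Fin m → Bool),
      PsiM q (List.ofFn (fun j => sOp (ε j)
        (if choose j then
          C p q (Sum.inl u) + ContinuousLinearMap.adjoint (C q p (Sum.inr u))
         else
          C q p (Sum.inl u) + ContinuousLinearMap.adjoint (C p q (Sum.inr u))))).prod
      = fockState (List.ofFn (fun j => sOp (ε j)
          (if choose j then
            ((Real.sqrt (b p q u) : ℂ) • (ell 0 + ContinuousLinearMap.adjoint (ell 1))) * P₂
           else
            ((Real.sqrt (b p q u) : ℂ) • (ell 0 + ContinuousLinearMap.adjoint (ell 1))) * P₁))).prod :=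
  matricialRCircular_pair_oddEven_realization_general r U u p q hpq b hbsym C hC ell hell P₁ P₂ hP₁
    hP₂
end
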